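/- arXiv:1008.3318 — 5 statements merged into one kernel-verified Lean document; each statement's English description precedes it below -/
import Mathlib

section
/- Let X be a metric space and p, x, y, z ∈ X with x ≠ p, y ≠ p, z ≠ p. If the comparison angles satisfy ∠̃p(x,y) + ∠̃p(y,z) + ∠̃p(z,x) ≤ 2π (inequality (1+3)), then the quadruple (p; x, y, z) satisfies inequality (*): dist(p,x)² + dist(p,y)² + dist(p,z)² ≥ (1/3)·(dist(x,y)² + dist(y,z)² + dist(z,x)²). (That is, condition (1+3) at p implies condition (*); in the notation of the paper, 𝔅 ⊆ 𝔄.) -/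
open Real

/-- The comparison (model) angle at `p` between `x` and `y` in a metric space. -/
noncomputable def comparisonAngle {X : Type*} [MetricSpace X] (p x y : X) : ℝ :=
  Real.arccos ((dist p x ^ 2 + dist p y ^ 2 - dist x y ^ 2) / (2 * dist p x * dist p y))

/-!
Writing `a, b, c` for the distances from `p` and `α, β, γ` for the comparison angles, the law
of cosines turns `3 (a² + b² + c²) - (|xy|² + |yz|² + |zx|²)` into the quadratic form
`a² + b² + c² + 2ab cos α + 2bc cos β + 2ca cos γ`. When `α + β + γ ≤ 2π` this form is bounded below
by a sum of two squares: if `β + γ ≤ π` we may lower `cos α` to `-1` and `cos γ` to `cos (π - β)`, and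
otherwise `α ≤ 2π - (β + γ) ≤ π` lets us lower `cos α` to `cos (β + γ)`.
-/

lemma abs_sq_add_sq_sub_sq_div_le_one {a b d : ℝ} (ha : 0 ≤ a) (hb : 0 ≤ b)
    (hd₁ : |a - b| ≤ d) (hd₂ : d ≤ a + b) :
    |(a ^ 2 + b ^ 2 - d ^ 2) / (2 * a * b)| ≤ 1 := by
  rcases (mul_nonneg (mul_nonneg zero_le_two ha) hb).eq_or_lt with hab | hab
  · simp [← hab]
  rw [abs_div, abs_of_pos hab, div_le_one hab, abs_le]
  have hd : 0 ≤ d := (abs_nonneg _).trans hd₁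
  have hsq : (a - b) ^ 2 ≤ d ^ 2 := by
    rw [← sq_abs]; exact pow_le_pow_left₀ (abs_nonneg _) hd₁ 2
  constructor <;> nlinarith [pow_le_pow_left₀ hd hd₂ 2]

lemma cos_comparisonAngle {X : Type*} [MetricSpace X] (p x y : X) :
    cos (comparisonAngle p x y) =
      (dist p x ^ 2 + dist p y ^ 2 - dist x y ^ 2) / (2 * dist p x * dist p y) := by
  have h := abs_le.mp <| abs_sq_add_sq_sub_sq_div_le_one dist_nonneg dist_nonneg
    (by simpa only [dist_comm p] using abs_dist_sub_le x y p) (dist_triangle_left x y p)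
  exact cos_arccos h.1 h.2

lemma comparisonAngle_nonneg {X : Type*} [MetricSpace X] (p x y : X) :
    0 ≤ comparisonAngle p x y :=
  arccos_nonneg _

-- Also valid when `x = p` or `y = p`, where the angle takes the junk value `arccos 0`.
lemma dist_sq_eq_sub_cos_comparisonAngle {X : Type*} [MetricSpace X] (p x y : X) :
    dist x y ^ 2 = dist p x ^ 2 + dist p y ^ 2
      - 2 * dist p x * dist p y * cos (comparisonAngle p x y) := by
  rcases eq_or_ne x p with rfl | hx
  · simp
  rcases eq_or_ne y p with rfl | hy
  · simp [dist_comm]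
  have : 2 * dist p x * dist p y ≠ 0 := by
    have := dist_pos.mpr hx.symm; have := dist_pos.mpr hy.symm; positivity
  rw [cos_comparisonAngle, mul_div_cancel₀ _ this]
  ring

lemma quadratic_cos_form_nonneg_of_cos_add_le {a b c α β γ : ℝ} (hab : 0 ≤ a * b)
    (hα : cos (β + γ) ≤ cos α) :
    0 ≤ a ^ 2 + b ^ 2 + c ^ 2 + 2 * a * b * cos α + 2 * b * c * cos β + 2 * c * a * cos γ := by
  have key := mul_le_mul_of_nonneg_left hα (mul_nonneg zero_le_two hab)
  rw [cos_add] at key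
  nlinarith [sq_nonneg (c + a * cos γ + b * cos β), sq_nonneg (a * sin γ - b * sin β),
    sin_sq_add_cos_sq β, sin_sq_add_cos_sq γ]

lemma quadratic_cos_form_nonneg_of_add_le_pi {a b c α β γ : ℝ} (ha : 0 ≤ a) (hb : 0 ≤ b)
    (hc : 0 ≤ c) (hβ : 0 ≤ β) (hγ : 0 ≤ γ) (hβγ : β + γ ≤ π) :
    0 ≤ a ^ 2 + b ^ 2 + c ^ 2 + 2 * a * b * cos α + 2 * b * c * cos β + 2 * c * a * cos γ := by
  have hγ' : -cos β ≤ cos γ := by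
    rw [← cos_pi_sub]; exact cos_le_cos_of_nonneg_of_le_pi hγ (by linarith) (by linarith)
  have h₁ : 2 * a * b * -1 ≤ 2 * a * b * cos α := by gcongr; exact neg_one_le_cos α
  have h₂ : 2 * c * a * -cos β ≤ 2 * c * a * cos γ := by gcongr
  nlinarith [sq_nonneg (b - a + c * cos β), sq_nonneg (c * sin β), sin_sq_add_cos_sq β]

lemma quadratic_cos_form_nonneg {a b c α β γ : ℝ} (ha : 0 ≤ a) (hb : 0 ≤ b) (hc : 0 ≤ c)
    (hα : 0 ≤ α) (hβ : 0 ≤ β) (hγ : 0 ≤ γ) (hsum : α + β + γ ≤ 2 * π) :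
    0 ≤ a ^ 2 + b ^ 2 + c ^ 2 + 2 * a * b * cos α + 2 * b * c * cos β + 2 * c * a * cos γ := by
  rcases le_or_gt (β + γ) π with hβγ | hβγ
  · exact quadratic_cos_form_nonneg_of_add_le_pi ha hb hc hβ hγ hβγ
  · refine quadratic_cos_form_nonneg_of_cos_add_le (mul_nonneg ha hb) ?_
    rw [← cos_two_pi_sub]
    exact cos_le_cos_of_nonneg_of_le_pi hα (by linarith) (by linarith)

theorem star_ineq_of_angle_sum_le_two_pi_general
    {X : Type*} [MetricSpace X] (p x y z : X)
    (h : comparisonAngle p x y + comparisonAngle p y z + comparisonAngle p z x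
      ≤ 2 * π) :
    dist p x ^ 2 + dist p y ^ 2 + dist p z ^ 2 ≥
      (1 / 3) * (dist x y ^ 2 + dist y z ^ 2 + dist z x ^ 2) := by
  have hform := quadratic_cos_form_nonneg (dist_nonneg : 0 ≤ dist p x)
    (dist_nonneg : 0 ≤ dist p y) (dist_nonneg : 0 ≤ dist p z)
    (comparisonAngle_nonneg p x y) (comparisonAngle_nonneg p y z)
    (comparisonAngle_nonneg p z x) h
  linarith [dist_sq_eq_sub_cos_comparisonAngle p x y, dist_sq_eq_sub_cos_comparisonAngle p y z,
    dist_sq_eq_sub_cos_comparisonAngle p z x]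

/-- Condition (1+3) at `p` implies condition (*): if the three comparison angles
at `p` between `x, y, z` sum to at most `2π`, then the quadruple `(p; x, y, z)`
satisfies inequality (*). -/
theorem star_ineq_of_angle_sum_le_two_pi
    {X : Type*} [MetricSpace X] (p x y z : X)
    (hx : x ≠ p) (hy : y ≠ p) (hz : z ≠ p)
    (h : comparisonAngle p x y + comparisonAngle p y z + comparisonAngle p z x
      ≤ 2 * π) :
    dist p x ^ 2 + dist p y ^ 2 + dist p z ^ 2 ≥
      (1 / 3) * (dist x y ^ 2 + dist y z ^ 2 + dist z x ^ 2) :=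
  star_ineq_of_angle_sum_le_two_pi_general p x y z h
end

section
/- Let X be a metric space in which every quadruple of points (p; x, y, z) satisfies inequality (*). Then for all p, q, z, x ∈ X with dist(p,z) = dist(q,z) = dist(p,q)/2 (z is a midpoint of p and q), the weaker estimate (***) holds: 3·dist(x,z)² ≥ dist(x,p)² + dist(x,q)² − (1/2)·dist(p,q)². -/
/-- If every quadruple of a metric space satisfies inequality (*), then for any
midpoint `z` of `p` and `q` and any point `x`, the weaker estimate (***) holds:
`3·dist(x,z)² ≥ dist(x,p)² + dist(x,q)² − (1/2)·dist(p,q)²`. -/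
theorem weak_estimate_of_star_ineq
    {X : Type*} [MetricSpace X]
    (hstar : ∀ p x y z : X,
      dist p x ^ 2 + dist p y ^ 2 + dist p z ^ 2 ≥
        (1 / 3) * (dist x y ^ 2 + dist y z ^ 2 + dist z x ^ 2))
    (p q z x : X)
    (hpz : dist p z = dist p q / 2) (hqz : dist q z = dist p q / 2) :
    3 * dist x z ^ 2 ≥ dist x p ^ 2 + dist x q ^ 2 - (1 / 2) * dist p q ^ 2 := by
  have h := hstar z x p q
  rw [dist_comm z x, dist_comm z p, dist_comm z q, hpz, hqz, dist_comm q x] at h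
  nlinarith [h]
end

section
/- Let X be a metric space in which every quadruple of points satisfies inequality (*). Let p, q, z ∈ X satisfy dist(p,z) = dist(q,z) = dist(p,q)/2, and let x, x' ∈ X satisfy dist(x,z) > 0, dist(x',z) = (1/3)·dist(x,z) and dist(x,x') = (2/3)·dist(x,z) (i.e., x' is the point on a geodesic [x z] with |x'z| = |xz|/3). Define real numbers α, α' by α·dist(x,z)² = dist(x,p)² + dist(x,q)² − (1/2)·dist(p,q)² and α'·dist(x',z)² = dist(x',p)² + dist(x',q)² − (1/2)·dist(p,q)². Then α' ≥ 3·α − 4. -/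
/-- The recursion step in the proof of the Main theorem: if every quadruple
satisfies inequality (*), `z` is a midpoint of `p` and `q`, and `x'` is the
point one third of the way from `z` to `x` (on a geodesic `[x z]`), then the
coefficients `α, α'` defined by
`α·dist(x,z)² = dist(x,p)² + dist(x,q)² − (1/2)·dist(p,q)²` (and similarly
for `α'` with `x'`) satisfy `α' ≥ 3·α − 4`. -/
theorem alpha_recursion_of_star_ineq
    {X : Type*} [MetricSpace X]
    (hstar : ∀ p x y z : X,
      dist p x ^ 2 + dist p y ^ 2 + dist p z ^ 2 ≥
        (1 / 3) * (dist x y ^ 2 + dist y z ^ 2 + dist z x ^ 2))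
    (p q z x x' : X)
    (hpz : dist p z = dist p q / 2) (hqz : dist q z = dist p q / 2)
    (hxz : 0 < dist x z)
    (hx'z : dist x' z = (1 / 3) * dist x z)
    (hxx' : dist x x' = (2 / 3) * dist x z)
    (α α' : ℝ)
    (hα : α * dist x z ^ 2 = dist x p ^ 2 + dist x q ^ 2 - (1 / 2) * dist p q ^ 2)
    (hα' : α' * dist x' z ^ 2
      = dist x' p ^ 2 + dist x' q ^ 2 - (1 / 2) * dist p q ^ 2) :
    α' ≥ 3 * α - 4 := by
  have h := hstar x' p q x
  rw [dist_comm x' x, dist_comm q x] at h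
  rw [hx'z] at hα'
  have hd2 : 0 < dist x z ^ 2 := by positivity
  nlinarith [h, hα, hα', hd2]
end

section
/- Let X be a metric space such that (i) every quadruple of points (p; x, y, z) satisfies inequality (*), and (ii) X is geodesic in the sense that for all a, b ∈ X and every t ∈ [0,1] there exists w ∈ X with dist(a,w) = t·dist(a,b) and dist(w,b) = (1−t)·dist(a,b). Then for all p, q, z, x ∈ X with dist(p,z) = dist(q,z) = dist(p,q)/2 (z a midpoint of p and q), the midpoint comparison inequality (**) holds: 2·dist(x,z)² ≥ dist(x,p)² + dist(x,q)² − (1/2)·dist(p,q)². (This is the key step of the 'if' part of the Main theorem: (**) for all midpoints is the standard comparison characterizing curvature ≥ 0.) -/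
set_option maxHeartbeats 1000000 in
/-- Key step of the 'if' part of the Main theorem: in a geodesic metric space
in which every quadruple satisfies inequality (*), the midpoint comparison
inequality (**) holds: for any midpoint `z` of `p` and `q` and any `x`,
`2·dist(x,z)² ≥ dist(x,p)² + dist(x,q)² − (1/2)·dist(p,q)²`. -/
theorem midpoint_comparison_of_star_ineq
    {X : Type*} [MetricSpace X]
    (hstar : ∀ p x y z : X,
      dist p x ^ 2 + dist p y ^ 2 + dist p z ^ 2 ≥
        (1 / 3) * (dist x y ^ 2 + dist y z ^ 2 + dist z x ^ 2))
    (hgeo : ∀ a b : X, ∀ t : ℝ, t ∈ Set.Icc (0 : ℝ) 1 →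
      ∃ w : X, dist a w = t * dist a b ∧ dist w b = (1 - t) * dist a b)
    (p q z x : X)
    (hpz : dist p z = dist p q / 2) (hqz : dist q z = dist p q / 2) :
    2 * dist x z ^ 2 ≥ dist x p ^ 2 + dist x q ^ 2 - (1 / 2) * dist p q ^ 2 := by
  have key : ∀ n : ℕ, ∀ p q z x : X,
      dist p z = dist p q / 2 → dist q z = dist p q / 2 →
      2 * dist x z ^ 2 ≥ (1 - (1/3 : ℝ)^(n+1)) *
        (dist x p ^ 2 + dist x q ^ 2 - (1 / 2) * dist p q ^ 2) := by
    intro n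
    induction n with
    | zero =>
      intro p q z x hpz hqz
      have h := hstar z x p q
      have h1 : dist z p = dist p q / 2 := by rw [dist_comm]; exact hpz
      have h2 : dist z q = dist p q / 2 := by rw [dist_comm]; exact hqz
      have h3 : dist z x = dist x z := dist_comm z x
      have h4 : dist q x = dist x q := dist_comm q x
      rw [h1, h2, h3, h4] at h
      nlinarith [h]
    | succ n ih =>
      intro p q z x hpz hqz
      set e : ℝ := (1/3)^(n+1) with he
      have he0 : 0 < e := by positivity
      have he1 : e ≤ 1/3 := by
        rw [he]
        calc (1/3 : ℝ)^(n+1) ≤ (1/3)^1 :=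
          pow_le_pow_of_le_one (by norm_num) (by norm_num) (by omega)
        _ = 1/3 := pow_one _
      have hd : (0:ℝ) < 3 - e := by linarith
      have h1e : (0:ℝ) < 1 - e := by linarith
      set t : ℝ := 2 / (3 - e) with htdef
      have ht0 : 0 ≤ t := by positivity
      have ht1 : t ≤ 1 := by rw [htdef, div_le_one hd]; linarith
      obtain ⟨w, hw1, hw2⟩ := hgeo x z t ⟨ht0, ht1⟩
      have hIH := ih p q z w hpz hqz
      have hB := hstar w x p q
      have hqx : dist q x = dist x q := dist_comm q x
      rw [hqx] at hB
      have hwx : dist w x = t * dist x z := by rw [dist_comm]; exact hw1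
      have htd : t * (3 - e) = 2 := by
        rw [htdef]; field_simp
      have h1td : (1 - t) * (3 - e) = 1 - e := by
        rw [htdef]; field_simp; ring
      have hx2 : (3 - e)^2 * dist w x ^ 2 = 4 * dist x z ^ 2 := by
        rw [hwx]
        have : (3 - e)^2 * (t * dist x z) ^ 2 = (t * (3 - e))^2 * dist x z ^ 2 := by
          ring
        rw [this, htd]; norm_num
      have hz2 : (3 - e)^2 * dist w z ^ 2 = (1 - e)^2 * dist x z ^ 2 := by
        rw [hw2]
        have : (3 - e)^2 * ((1 - t) * dist x z) ^ 2
            = ((1 - t) * (3 - e))^2 * dist x z ^ 2 := by ring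
        rw [this, h1td]
      have hexp : (1/3 : ℝ)^(n+1+1) = e / 3 := by
        rw [pow_succ, he]; ring
      rw [hexp]
      -- Step 1: upper bound on (3-e)^2 * (dist w p ^ 2 + dist w q ^ 2 - b²/2)
      have hP' : (1 - e) * ((3 - e)^2 *
            (dist w p ^ 2 + dist w q ^ 2 - (1/2) * dist p q ^ 2))
          ≤ (1 - e) * (2 * (1 - e) * dist x z ^ 2) := by
        calc (1 - e) * ((3 - e)^2 *
              (dist w p ^ 2 + dist w q ^ 2 - (1/2) * dist p q ^ 2))
            = (3 - e)^2 * ((1 - e) *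
              (dist w p ^ 2 + dist w q ^ 2 - (1/2) * dist p q ^ 2)) := by ring
          _ ≤ (3 - e)^2 * (2 * dist w z ^ 2) :=
              mul_le_mul_of_nonneg_left hIH (sq_nonneg _)
          _ = (1 - e) * (2 * (1 - e) * dist x z ^ 2) := by
              linear_combination 2 * hz2
      have hP : (3 - e)^2 * (dist w p ^ 2 + dist w q ^ 2 - (1/2) * dist p q ^ 2)
          ≤ 2 * (1 - e) * dist x z ^ 2 :=
        le_of_mul_le_mul_left hP' h1e
      -- Step 2: combine with (*) at apex w
      have hB2 : (3 - e)^2 * ((1/3) *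
            (dist x p ^ 2 + dist p q ^ 2 + dist x q ^ 2))
          ≤ (3 - e)^2 * (dist w x ^ 2 + dist w p ^ 2 + dist w q ^ 2) :=
        mul_le_mul_of_nonneg_left hB (sq_nonneg _)
      have hcomb : (3 - e) * ((3 - e) *
            (dist x p ^ 2 + dist x q ^ 2 - (1/2) * dist p q ^ 2))
          ≤ (3 - e) * (6 * dist x z ^ 2) := by
        linarith [hB2, hx2, hP]
      have hfin : (3 - e) * (dist x p ^ 2 + dist x q ^ 2 - (1/2) * dist p q ^ 2)
          ≤ 6 * dist x z ^ 2 := le_of_mul_le_mul_left hcomb hd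
      calc (1 - e/3) * (dist x p ^ 2 + dist x q ^ 2 - 1/2 * dist p q ^ 2)
          = (1/3) * ((3 - e) *
            (dist x p ^ 2 + dist x q ^ 2 - (1/2) * dist p q ^ 2)) := by ring
        _ ≤ (1/3) * (6 * dist x z ^ 2) := by linarith
        _ = 2 * dist x z ^ 2 := by ring
  -- pass to the limit
  set R : ℝ := dist x p ^ 2 + dist x q ^ 2 - (1 / 2) * dist p q ^ 2 with hRdef
  by_cases hR0 : R ≤ 0
  · have : (0:ℝ) ≤ 2 * dist x z ^ 2 := by positivity
    linarith
  · push_neg at hR0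
    by_contra hcon
    push_neg at hcon
    have hε : (0:ℝ) < (R - 2 * dist x z ^ 2) / R := by
      apply div_pos <;> linarith
    obtain ⟨n, hn⟩ := exists_pow_lt_of_lt_one hε (by norm_num : (1/3 : ℝ) < 1)
    have hn' : (1/3 : ℝ)^(n+1) ≤ (1/3)^n :=
      pow_le_pow_of_le_one (by norm_num) (by norm_num) (by omega)
    have hk := key n p q z x hpz hqz
    have hlt : (1/3 : ℝ)^(n+1) * R < ((R - 2 * dist x z ^ 2) / R) * R := by
      apply mul_lt_mul_of_pos_right _ hR0
      exact lt_of_le_of_lt hn' hn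
    rw [div_mul_cancel₀ _ (ne_of_gt hR0)] at hlt
    nlinarith [hk]
end

section
/- For any four points p, x₁, x₂, x₃ of the hyperbolic plane (the upper half-plane with its hyperbolic metric), the inequality (*)⁻ holds: (cosh(dist(p,x₁)) + cosh(dist(p,x₂)) + cosh(dist(p,x₃)))² ≥ ∑_{i,j=1}^{3} cosh(dist(xᵢ,xⱼ)), where the double sum ranges over all ordered pairs, including i = j. (This is the inequality (*)⁻ in the model space of curvature −1.) -/
noncomputable def hypT (z : UpperHalfPlane) : ℝ :=
  (z.re * z.re + z.im * z.im + 1) / (2 * z.im)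

noncomputable def hypX (z : UpperHalfPlane) : ℝ := z.re / z.im

noncomputable def hypY (z : UpperHalfPlane) : ℝ :=
  (z.re * z.re + z.im * z.im - 1) / (2 * z.im)

lemma hyp_cosh_eq (z w : UpperHalfPlane) :
    Real.cosh (dist z w) =
      hypT z * hypT w - hypX z * hypX w - hypY z * hypY w := by
  rw [UpperHalfPlane.cosh_dist]
  have hz : z.im ≠ 0 := z.im_pos.ne'
  have hw : w.im ≠ 0 := w.im_pos.ne'
  have : dist (z : ℂ) (w : ℂ) ^ 2 = (z.re - w.re) ^ 2 + (z.im - w.im) ^ 2 := by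
    rw [Complex.dist_eq, Complex.sq_norm, Complex.normSq_apply]
    simp [UpperHalfPlane.coe_re, UpperHalfPlane.coe_im]
    ring
  rw [this]
  unfold hypT hypX hypY
  field_simp
  ring

lemma hyp_norm (z : UpperHalfPlane) :
    hypT z ^ 2 - hypX z ^ 2 - hypY z ^ 2 = 1 := by
  have hz : z.im ≠ 0 := z.im_pos.ne'
  unfold hypT hypX hypY
  field_simp
  ring

lemma rev_cs (t x y A B C : ℝ) (h : t ^ 2 - x ^ 2 - y ^ 2 = 1) :
    (t * A - x * B - y * C) ^ 2 ≥ A ^ 2 - B ^ 2 - C ^ 2 := by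
  have ht : 1 ≤ t ^ 2 := by nlinarith [sq_nonneg x, sq_nonneg y]
  have ht0 : 0 < t ^ 2 := by linarith
  set u1 := t * B - x * A with hu1
  set u2 := t * C - y * A with hu2
  set v := x * C - y * B with hv
  have hrel : x * u2 - y * u1 = t * v := by rw [hu1, hu2, hv]; ring
  have key : t ^ 2 * v ^ 2 ≤ (t ^ 2 - 1) * (u1 ^ 2 + u2 ^ 2) := by
    have hid : (x * u2 - y * u1) ^ 2 + (y * u2 + x * u1) ^ 2
        = (x ^ 2 + y ^ 2) * (u1 ^ 2 + u2 ^ 2) := by ring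
    have hx2 : x ^ 2 + y ^ 2 = t ^ 2 - 1 := by linarith
    have h2 : (x * u2 - y * u1) ^ 2 = t ^ 2 * v ^ 2 := by rw [hrel]; ring
    rw [h2, hx2] at hid
    nlinarith [sq_nonneg (y * u2 + x * u1)]
  have key2 : v ^ 2 ≤ u1 ^ 2 + u2 ^ 2 := by
    nlinarith [sq_nonneg u1, sq_nonneg u2]
  have expand : (t * A - x * B - y * C) ^ 2 - (A ^ 2 - B ^ 2 - C ^ 2)
      = (u1 ^ 2 + u2 ^ 2 - v ^ 2) + (t ^ 2 - x ^ 2 - y ^ 2 - 1) * (A ^ 2 - B ^ 2 - C ^ 2) := by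
    rw [hu1, hu2, hv]; ring
  have hz : t ^ 2 - x ^ 2 - y ^ 2 - 1 = 0 := by linarith
  rw [hz, zero_mul, add_zero] at expand
  linarith

/-- Inequality (*)⁻ in the model space of curvature −1: for any four points
`p, x₁, x₂, x₃` of the hyperbolic plane (the upper half-plane with its
hyperbolic metric),
`(∑ᵢ cosh(dist(p,xᵢ)))² ≥ ∑_{i,j} cosh(dist(xᵢ,xⱼ))`. -/
theorem star_minus_ineq_hyperbolic
    (p : UpperHalfPlane) (x : Fin 3 → UpperHalfPlane) :
    (∑ i, Real.cosh (dist p (x i))) ^ 2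
      ≥ ∑ i, ∑ j, Real.cosh (dist (x i) (x j)) := by
  simp only [hyp_cosh_eq]
  simp only [Fin.sum_univ_three]
  have h := hyp_norm p
  have h1 := rev_cs (hypT p) (hypX p) (hypY p)
    (hypT (x 0) + hypT (x 1) + hypT (x 2))
    (hypX (x 0) + hypX (x 1) + hypX (x 2))
    (hypY (x 0) + hypY (x 1) + hypY (x 2)) h
  set_option maxHeartbeats 1000000 in
  linarith [h1]
end
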